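/- Let Br and Br' be Bratteli diagrams with the same level sets. Then the product diagram Br × Br', with levels (Br × Br')_j = Br_j × Br'_j and multiplicity matrix entries (Br × Br')^{(j)}_{(v,w),(v',w')} = Br^{(j)}_{v,v'} · Br'^{(j)}_{w,w'}, together with the sum potential F''(a,a') = F(a) + F'(a'), satisfies (Br × Br')^+ = Br^+ × Br'^+; that is, an infinite path (p,q) in the product diagram is an F''-geodesic if and only if p is an F-geodesic in Br and q is an F'-geodesic in Br'. -/
import Mathlib


open scoped BigOperators

/-- A Bratteli diagram: finite nonempty level sets `V n`, arrows `E n` from level `n`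
to level `n+1`, a single root at level `0`, no sinks, and no sources besides the root. -/
structure Bratteli where
  V : ℕ → Type
  E : ℕ → Type
  instVFin : ∀ n, Fintype (V n)
  instEFin : ∀ n, Fintype (E n)
  instVNe : ∀ n, Nonempty (V n)
  instRoot : Subsingleton (V 0)
  src : ∀ n, E n → V n
  rng : ∀ n, E n → V (n + 1)
  noSink : ∀ n (v : V n), ∃ e : E n, src n e = v
  noSource : ∀ n (v : V (n + 1)), ∃ e : E n, rng n e = v

attribute [instance] Bratteli.instVFin Bratteli.instEFin Bratteli.instVNe Bratteli.instRoot

/-- Finite paths of length `n` starting at the root. -/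
abbrev Bratteli.FinPath (B : Bratteli) (n : ℕ) :=
  { p : ∀ i : Fin n, B.E i.val //
    ∀ (i : ℕ) (h : i + 1 < n),
      B.rng i (p ⟨i, Nat.lt_of_succ_lt h⟩) = B.src (i + 1) (p ⟨i + 1, h⟩) }

/-- Infinite paths starting at the root. -/
structure Bratteli.InfPath (B : Bratteli) where
  arrow : ∀ n, B.E n
  compat : ∀ n, B.rng n (arrow n) = B.src (n + 1) (arrow (n + 1))

/-- The initial segment `p[1,n]` of an infinite path. -/
def Bratteli.InfPath.take {B : Bratteli} (p : B.InfPath) (n : ℕ) : B.FinPath n :=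
  ⟨fun i => p.arrow i.val, fun i _ => p.compat i⟩

/-- The endpoint (range) of a finite path of positive length. -/
def pend {B : Bratteli} {n : ℕ} (μ : B.FinPath (n + 1)) : B.V (n + 1) :=
  B.rng n (μ.1 ⟨n, Nat.lt_succ_self n⟩)

/-- The vertex at level `n` through which a path of length `n+1` passes. -/
def through {B : Bratteli} {n : ℕ} (μ : B.FinPath (n + 1)) : B.V n :=
  B.src n (μ.1 ⟨n, Nat.lt_succ_self n⟩)

/-- The value `F(μ) = Σ_i F(a_i)` of a potential on a finite path. -/
noncomputable def pathVal {B : Bratteli} (F : ∀ n, B.E n → ℝ) {n : ℕ}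
    (μ : B.FinPath n) : ℝ :=
  ∑ i : Fin n, F i.val (μ.1 i)

/-- An infinite path `p` from the root is an `F`-geodesic when for every `n`,
`F(p[1,n]) ≤ F(μ)` for every length-`n` path `μ` from the root with the same endpoint. -/
def IsGeodesic {B : Bratteli} (F : ∀ n, B.E n → ℝ) (p : B.InfPath) : Prop :=
  ∀ (n : ℕ) (μ : B.FinPath (n + 1)), pend μ = pend (p.take (n + 1)) →
    pathVal F (p.take (n + 1)) ≤ pathVal F μ

/-- The product of two Bratteli diagrams: levels `Br_j × Br'_j` and arrows the pairs of
arrows, with multiplicities `(Br × Br')^{(j)}_{(v,w),(v',w')} = Br^{(j)}_{v,v'} Br'^{(j)}_{w,w'}`. -/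
def prodB (B C : Bratteli) : Bratteli where
  V n := B.V n × C.V n
  E n := B.E n × C.E n
  instVFin n := inferInstance
  instEFin n := inferInstance
  instVNe n := inferInstance
  instRoot := inferInstance
  src n e := (B.src n e.1, C.src n e.2)
  rng n e := (B.rng n e.1, C.rng n e.2)
  noSink n v := by
    obtain ⟨e, he⟩ := B.noSink n v.1
    obtain ⟨f, hf⟩ := C.noSink n v.2
    exact ⟨(e, f), by simp [he, hf]⟩
  noSource n v := by
    obtain ⟨e, he⟩ := B.noSource n v.1
    obtain ⟨f, hf⟩ := C.noSource n v.2
    exact ⟨(e, f), by simp [he, hf]⟩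

/-- First coordinate of an infinite path in a product diagram. -/
def fstPath {B C : Bratteli} (p : (prodB B C).InfPath) : B.InfPath :=
  ⟨fun n => (p.arrow n).1, fun n => congrArg Prod.fst (p.compat n)⟩

/-- Second coordinate of an infinite path in a product diagram. -/
def sndPath {B C : Bratteli} (p : (prodB B C).InfPath) : C.InfPath :=
  ⟨fun n => (p.arrow n).2, fun n => congrArg Prod.snd (p.compat n)⟩


def pairFin {B C : Bratteli} {n : ℕ} (μ : B.FinPath n) (ν : C.FinPath n) :
    (prodB B C).FinPath n :=
  ⟨fun i => (μ.1 i, ν.1 i), fun i h => Prod.ext (μ.2 i h) (ν.2 i h)⟩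

def fstFin {B C : Bratteli} {n : ℕ} (μ : (prodB B C).FinPath n) : B.FinPath n :=
  ⟨fun i => (μ.1 i).1, fun i h => congrArg Prod.fst (μ.2 i h)⟩

def sndFin {B C : Bratteli} {n : ℕ} (μ : (prodB B C).FinPath n) : C.FinPath n :=
  ⟨fun i => (μ.1 i).2, fun i h => congrArg Prod.snd (μ.2 i h)⟩

lemma pathVal_split {B C : Bratteli} (F : ∀ n, B.E n → ℝ) (F' : ∀ n, C.E n → ℝ)
    {n : ℕ} (μ : (prodB B C).FinPath n) :
    pathVal (fun n (e : (prodB B C).E n) => F n e.1 + F' n e.2) μ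
      = pathVal F (fstFin μ) + pathVal F' (sndFin μ) := by
  simp [pathVal, fstFin, sndFin, Finset.sum_add_distrib]

/-- For the sum potential `F''(a,a') = F(a) + F'(a')` on the product diagram,
`(Br × Br')⁺ = Br⁺ × Br'⁺`: an infinite path `(p,q)` is an `F''`-geodesic iff `p` is an
`F`-geodesic and `q` is an `F'`-geodesic. -/
theorem stmt_6 (B C : Bratteli) (F : ∀ n, B.E n → ℝ) (F' : ∀ n, C.E n → ℝ)
    (p : (prodB B C).InfPath) :
    IsGeodesic (fun n (e : (prodB B C).E n) => F n e.1 + F' n e.2) p ↔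
      IsGeodesic F (fstPath p) ∧ IsGeodesic F' (sndPath p) := by
  constructor
  · intro h
    constructor
    · intro n μ hμ
      have := h n (pairFin μ ((sndPath p).take (n + 1)))
        (Prod.ext hμ rfl)
      rw [pathVal_split, pathVal_split] at this
      have e1 : fstFin (pairFin μ ((sndPath p).take (n + 1))) = μ := rfl
      have e2 : sndFin (pairFin μ ((sndPath p).take (n + 1))) = (sndPath p).take (n + 1) := rfl
      have e3 : fstFin (p.take (n + 1)) = (fstPath p).take (n + 1) := rfl
      have e4 : sndFin (p.take (n + 1)) = (sndPath p).take (n + 1) := rfl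
      rw [e1, e2, e3, e4] at this
      linarith
    · intro n μ hμ
      have := h n (pairFin ((fstPath p).take (n + 1)) μ)
        (Prod.ext rfl hμ)
      rw [pathVal_split, pathVal_split] at this
      have e1 : fstFin (pairFin ((fstPath p).take (n + 1)) μ) = (fstPath p).take (n + 1) := rfl
      have e2 : sndFin (pairFin ((fstPath p).take (n + 1)) μ) = μ := rfl
      have e3 : fstFin (p.take (n + 1)) = (fstPath p).take (n + 1) := rfl
      have e4 : sndFin (p.take (n + 1)) = (sndPath p).take (n + 1) := rfl
      rw [e1, e2, e3, e4] at this
      linarith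
  · rintro ⟨h1, h2⟩ n μ hμ
    have k1 := h1 n (fstFin μ) (congrArg Prod.fst hμ)
    have k2 := h2 n (sndFin μ) (congrArg Prod.snd hμ)
    rw [pathVal_split, pathVal_split]
    have e3 : fstFin (p.take (n + 1)) = (fstPath p).take (n + 1) := rfl
    have e4 : sndFin (p.take (n + 1)) = (sndPath p).take (n + 1) := rfl
    rw [e3, e4]
    linarith
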